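/- Each of the vector fields τ(X1), τ(X2), τ(Y), τ(Z), τ(D0) satisfies the conformality condition: writing [V, X1~] = a X1~ + b X2~ (mod Y~, Z~) and [V, X2~] = c X1~ + d X2~ (mod Y~, Z~), one has a = d and b = -c at every point. -/

import Mathlib

namespace Engel

/-- Underlying vector space of the Engel Lie algebra, coordinates (x1, x2, y, z). -/
abbrev E : Type := Fin 4 → ℝ

/-- The Engel bracket: [X1,X2] = Y, [X1,Y] = Z, all other brackets of basis vectors zero. -/
noncomputable def engelBracket (v w : E) : E :=
  ![0, 0, v 0 * w 1 - v 1 * w 0, v 0 * w 2 - v 2 * w 0]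

noncomputable def X1 : E := ![1, 0, 0, 0]
noncomputable def X2 : E := ![0, 1, 0, 0]
noncomputable def Y : E := ![0, 0, 1, 0]
noncomputable def Z : E := ![0, 0, 0, 1]

/-- The grading derivation D0 : X1 ↦ X1, X2 ↦ X2, Y ↦ 2Y, Z ↦ 3Z. -/
noncomputable def D0 : E → E := fun v => ![v 0, v 1, 2 * v 2, 3 * v 3]

/-- Commutator bracket of vector fields on R^4. -/
noncomputable def vfBracket (V W : E → E) : E → E :=
  fun p => fderiv ℝ W p (V p) - fderiv ℝ V p (W p)

/-- The Engel left-invariant frame. -/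
noncomputable def tX1 : E → E := fun _ => ![1, 0, 0, 0]
noncomputable def tX2 : E → E := fun p => ![0, 1, p 0, p 0 ^ 2 / 2]
noncomputable def tY : E → E := fun p => ![0, 0, 1, p 0]
noncomputable def tZ : E → E := fun _ => ![0, 0, 0, 1]

/-- Derivative of a function along a vector field. -/
noncomputable def lder (W : E → E) (f : E → ℝ) : E → ℝ := fun p => fderiv ℝ f p (W p)

/-- A vector field is horizontal if it lies pointwise in span{X1~, X2~}. -/
def IsHorizontal (W : E → E) : Prop := ∀ p : E, ∃ a b : ℝ, W p = a • tX1 p + b • tX2 p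

/-- A contact vector field: smooth, and its bracket with the horizontal frame is horizontal. -/
def IsContact (V : E → E) : Prop :=
  ContDiff ℝ (⊤ : ℕ∞) V ∧ IsHorizontal (vfBracket V tX1) ∧ IsHorizontal (vfBracket V tX2)

end Engel

namespace Engel

noncomputable def tauX1 : E → E := fun p => (p 2 - p 0 * p 1) • tZ p + p 1 • tY p + tX1 p
noncomputable def tauX2 : E → E := fun p => (p 0 ^ 2 / 2) • tZ p + (-p 0) • tY p + tX2 p
noncomputable def tauY : E → E := fun p => (-p 0) • tZ p + tY p
noncomputable def tauZ : E → E := fun p => tZ p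
noncomputable def tauD0 : E → E := fun p =>
  (3 * p 3 - 2 * p 0 * p 2 + p 0 ^ 2 * p 1 / 2) • tZ p + (2 * p 2 - p 0 * p 1) • tY p +
    p 0 • tX1 p + p 1 • tX2 p

end Engel

namespace Engel
open ContinuousLinearMap

/-! ### Closed forms of the τ-fields -/

lemma tauX1_eq : tauX1 = fun p : E => ![1, 0, p 1, p 2] := by
  funext p; ext i; fin_cases i <;>
    (simp [tauX1, tX1, tX2, tY, tZ]; try ring)

lemma tauX2_eq : tauX2 = fun _ : E => ![0, 1, 0, 0] := by
  funext p; ext i; fin_cases i <;>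
    (simp [tauX2, tX1, tX2, tY, tZ]; try ring)

lemma tauY_eq : tauY = fun _ : E => ![0, 0, 1, 0] := by
  funext p; ext i; fin_cases i <;>
    (simp [tauY, tX1, tX2, tY, tZ]; try ring)

lemma tauZ_eq : tauZ = fun _ : E => ![0, 0, 0, 1] := by
  funext p; ext i; fin_cases i <;>
    (simp [tauZ, tX1, tX2, tY, tZ]; try ring)

lemma tauD0_eq : tauD0 = fun p : E => ![p 0, p 1, 2 * p 2, 3 * p 3] := by
  funext p; ext i; fin_cases i <;>
    (simp [tauD0, tX1, tX2, tY, tZ]; try ring)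

/-! ### Derivatives -/

lemma hasFDerivAt_vec4 {f0 f1 f2 f3 : E → ℝ} {L0 L1 L2 L3 : E →L[ℝ] ℝ} {p : E}
    (h0 : HasFDerivAt f0 L0 p) (h1 : HasFDerivAt f1 L1 p)
    (h2 : HasFDerivAt f2 L2 p) (h3 : HasFDerivAt f3 L3 p) :
    HasFDerivAt (fun x => (![f0 x, f1 x, f2 x, f3 x] : E))
      (ContinuousLinearMap.pi ![L0, L1, L2, L3]) p := by
  apply hasFDerivAt_pi''
  intro i
  fin_cases i <;> simpa [ContinuousLinearMap.proj_pi] using ‹_›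

lemma fderiv_tX1 (p : E) : fderiv ℝ tX1 p = 0 := by
  unfold tX1; exact fderiv_const_apply _

lemma fderiv_tZ (p : E) : fderiv ℝ tZ p = 0 := by
  unfold tZ; exact fderiv_const_apply _

lemma fderiv_tX2 (p v : E) : fderiv ℝ tX2 p v = ![0, 0, v 0, p 0 * v 0] := by
  have h : HasFDerivAt tX2 (ContinuousLinearMap.pi
      ![0, 0, (proj 0 : E →L[ℝ] ℝ), p 0 • (proj 0 : E →L[ℝ] ℝ)]) p := by
    unfold tX2
    apply hasFDerivAt_vec4 (hasFDerivAt_const (0:ℝ) p) (hasFDerivAt_const (1:ℝ) p)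
      (hasFDerivAt_apply (𝕜 := ℝ) 0 p)
    have h := ((hasFDerivAt_apply (𝕜 := ℝ) 0 p).mul
      (hasFDerivAt_apply 0 p)).const_mul (2⁻¹:ℝ)
    refine (h.congr_fderiv ?_).congr_of_eventuallyEq (Filter.Eventually.of_forall fun x => ?_)
    · ext v; simp; ring
    · show x 0 ^ 2 / 2 = 2⁻¹ * (x 0 * x 0); ring
  rw [h.fderiv]
  ext i; fin_cases i <;> simp

lemma fderiv_tY (p v : E) : fderiv ℝ tY p v = ![0, 0, 0, v 0] := by
  have h : HasFDerivAt tY (ContinuousLinearMap.pi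
      ![0, 0, 0, (proj 0 : E →L[ℝ] ℝ)]) p := by
    unfold tY
    exact hasFDerivAt_vec4 (hasFDerivAt_const (0:ℝ) p) (hasFDerivAt_const (0:ℝ) p)
      (hasFDerivAt_const (1:ℝ) p) (hasFDerivAt_apply (𝕜 := ℝ) 0 p)
  rw [h.fderiv]
  ext i; fin_cases i <;> simp

lemma fderiv_tauX1 (p v : E) : fderiv ℝ tauX1 p v = ![0, 0, v 1, v 2] := by
  have h : HasFDerivAt tauX1 (ContinuousLinearMap.pi
      ![0, 0, (proj 1 : E →L[ℝ] ℝ), (proj 2 : E →L[ℝ] ℝ)]) p := by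
    rw [tauX1_eq]
    exact hasFDerivAt_vec4 (hasFDerivAt_const (1:ℝ) p) (hasFDerivAt_const (0:ℝ) p)
      (hasFDerivAt_apply (𝕜 := ℝ) 1 p) (hasFDerivAt_apply (𝕜 := ℝ) 2 p)
  rw [h.fderiv]
  ext i; fin_cases i <;> simp

lemma fderiv_tauX2 (p : E) : fderiv ℝ tauX2 p = 0 := by
  rw [tauX2_eq]; exact fderiv_const_apply _

lemma fderiv_tauY (p : E) : fderiv ℝ tauY p = 0 := by
  rw [tauY_eq]; exact fderiv_const_apply _

lemma fderiv_tauZ (p : E) : fderiv ℝ tauZ p = 0 := by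
  rw [tauZ_eq]; exact fderiv_const_apply _

lemma fderiv_tauD0 (p v : E) :
    fderiv ℝ tauD0 p v = ![v 0, v 1, 2 * v 2, 3 * v 3] := by
  have h : HasFDerivAt tauD0 (ContinuousLinearMap.pi
      ![(proj 0 : E →L[ℝ] ℝ), (proj 1 : E →L[ℝ] ℝ),
        (2:ℝ) • (proj 2 : E →L[ℝ] ℝ), (3:ℝ) • (proj 3 : E →L[ℝ] ℝ)]) p := by
    rw [tauD0_eq]
    exact hasFDerivAt_vec4 (hasFDerivAt_apply (𝕜 := ℝ) 0 p)
      (hasFDerivAt_apply (𝕜 := ℝ) 1 p)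
      ((hasFDerivAt_apply (𝕜 := ℝ) 2 p).const_mul 2)
      ((hasFDerivAt_apply (𝕜 := ℝ) 3 p).const_mul 3)
  rw [h.fderiv]
  ext i; fin_cases i <;> simp

end Engel

open Engel in
/-- Each τ-field satisfies the conformality condition: writing [V,X1~] ≡ a X1~ + b X2~ and
[V,X2~] ≡ c X1~ + d X2~ modulo Y~, Z~, one has a = d and b = -c at every point. -/
theorem tau_fields_are_conformal :
    ∀ V ∈ ({tauX1, tauX2, tauY, tauZ, tauD0} : Set (E → E)),
      ∃ a b c d r1 r2 s1 s2 : E → ℝ,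
        (∀ p, vfBracket V tX1 p =
          a p • tX1 p + b p • tX2 p + r1 p • tY p + r2 p • tZ p) ∧
        (∀ p, vfBracket V tX2 p =
          c p • tX1 p + d p • tX2 p + s1 p • tY p + s2 p • tZ p) ∧
        (∀ p, a p = d p) ∧ (∀ p, b p = -c p) := by
  intro V hV
  simp only [Set.mem_insert_iff, Set.mem_singleton_iff] at hV
  rcases hV with h | h | h | h | h <;> subst h
  · -- tauX1
    refine ⟨fun _ => 0, fun _ => 0, fun _ => 0, fun _ => 0,
      fun _ => 0, fun _ => 0, fun _ => 0, fun _ => 0, ?_, ?_, fun p => rfl, by simp⟩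
    · intro p
      show fderiv ℝ tX1 p (tauX1 p) - fderiv ℝ tauX1 p (tX1 p) = _
      rw [fderiv_tX1, fderiv_tauX1]
      ext i; fin_cases i <;> simp [tX1, tX2, tY, tZ]
    · intro p
      show fderiv ℝ tX2 p (tauX1 p) - fderiv ℝ tauX1 p (tX2 p) = _
      rw [fderiv_tX2, fderiv_tauX1]
      ext i; fin_cases i <;> (simp [tauX1_eq, tX1, tX2, tY, tZ]; try ring)
  · -- tauX2
    refine ⟨fun _ => 0, fun _ => 0, fun _ => 0, fun _ => 0,
      fun _ => 0, fun _ => 0, fun _ => 0, fun _ => 0, ?_, ?_, fun p => rfl, by simp⟩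
    · intro p
      show fderiv ℝ tX1 p (tauX2 p) - fderiv ℝ tauX2 p (tX1 p) = _
      rw [fderiv_tX1, fderiv_tauX2]
      ext i; fin_cases i <;> simp [tX1, tX2, tY, tZ]
    · intro p
      show fderiv ℝ tX2 p (tauX2 p) - fderiv ℝ tauX2 p (tX2 p) = _
      rw [fderiv_tX2, fderiv_tauX2]
      ext i; fin_cases i <;> (simp [tauX2_eq, tX1, tX2, tY, tZ]; try ring)
  · -- tauY
    refine ⟨fun _ => 0, fun _ => 0, fun _ => 0, fun _ => 0,
      fun _ => 0, fun _ => 0, fun _ => 0, fun _ => 0, ?_, ?_, fun p => rfl, by simp⟩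
    · intro p
      show fderiv ℝ tX1 p (tauY p) - fderiv ℝ tauY p (tX1 p) = _
      rw [fderiv_tX1, fderiv_tauY]
      ext i; fin_cases i <;> simp [tX1, tX2, tY, tZ]
    · intro p
      show fderiv ℝ tX2 p (tauY p) - fderiv ℝ tauY p (tX2 p) = _
      rw [fderiv_tX2, fderiv_tauY]
      ext i; fin_cases i <;> (simp [tauY_eq, tX1, tX2, tY, tZ]; try ring)
  · -- tauZ
    refine ⟨fun _ => 0, fun _ => 0, fun _ => 0, fun _ => 0,
      fun _ => 0, fun _ => 0, fun _ => 0, fun _ => 0, ?_, ?_, fun p => rfl, by simp⟩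
    · intro p
      show fderiv ℝ tX1 p (tauZ p) - fderiv ℝ tauZ p (tX1 p) = _
      rw [fderiv_tX1, fderiv_tauZ]
      ext i; fin_cases i <;> simp [tX1, tX2, tY, tZ]
    · intro p
      show fderiv ℝ tX2 p (tauZ p) - fderiv ℝ tauZ p (tX2 p) = _
      rw [fderiv_tX2, fderiv_tauZ]
      ext i; fin_cases i <;> (simp [tauZ_eq, tX1, tX2, tY, tZ]; try ring)
  · -- tauD0
    refine ⟨fun _ => -1, fun _ => 0, fun _ => 0, fun _ => -1,
      fun _ => 0, fun _ => 0, fun _ => 0, fun _ => 0, ?_, ?_, fun p => rfl, by simp⟩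
    · intro p
      show fderiv ℝ tX1 p (tauD0 p) - fderiv ℝ tauD0 p (tX1 p) = _
      rw [fderiv_tX1, fderiv_tauD0]
      ext i; fin_cases i <;> (simp [tX1, tX2, tY, tZ]; try ring)
    · intro p
      show fderiv ℝ tX2 p (tauD0 p) - fderiv ℝ tauD0 p (tX2 p) = _
      rw [fderiv_tX2, fderiv_tauD0]
      ext i; fin_cases i <;> (simp [tauD0_eq, tX1, tX2, tY, tZ]; try ring)
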